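/- arXiv:2601.04849 — 3 statements merged into one kernel-verified Lean document; each statement's English description precedes it below -/
import Mathlib

section
/- Let φ(t) = √2 · Γ((t+1)/2) / Γ(t/2). Then for all real numbers m₀, m with 0 < m₀ ≤ m, one has φ(m₀)/√m₀ ≤ φ(m)/√m. -/
noncomputable def phi (t : ℝ) : ℝ :=
  Real.sqrt 2 * Real.Gamma ((t + 1) / 2) / Real.Gamma (t / 2)

open Real Filter Finset

/-- Per-term monotonicity: `u ↦ log u / 2 + log (u+1) / 2 - log (u + 1/2)` is monotone
on positives. -/
lemma term_mono {u₀ u : ℝ} (h0 : 0 < u₀) (h : u₀ ≤ u) :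
    log u₀ / 2 + log (u₀ + 1) / 2 - log (u₀ + 1 / 2) ≤
      log u / 2 + log (u + 1) / 2 - log (u + 1 / 2) := by
  have hu : 0 < u := h0.trans_le h
  have key : u₀ * (u₀ + 1) * (u + 1 / 2) ^ 2 ≤ u * (u + 1) * (u₀ + 1 / 2) ^ 2 := by
    nlinarith [mul_nonneg (sub_nonneg.2 h) (show (0:ℝ) ≤ u + u₀ + 1 by linarith)]
  have hlog := Real.log_le_log (by positivity) key
  rw [Real.log_mul (by positivity) (by positivity), Real.log_mul (by positivity) (by positivity),
    Real.log_mul (by positivity) (by positivity), Real.log_mul (by positivity) (by positivity),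
    Real.log_pow, Real.log_pow] at hlog
  push_cast at hlog
  linarith

/-- Monotonicity of `x ↦ log Γ(x+1/2) - (log Γ(x) + log Γ(x+1))/2`. -/
lemma logGamma_mid_mono {x₀ x : ℝ} (h0 : 0 < x₀) (hx : x₀ ≤ x) :
    log (Gamma (x₀ + 1 / 2)) - (log (Gamma x₀) + log (Gamma (x₀ + 1))) / 2 ≤
      log (Gamma (x + 1 / 2)) - (log (Gamma x) + log (Gamma (x + 1))) / 2 := by
  have hx' : 0 < x := h0.trans_le hx
  set S : ℝ → ℕ → ℝ := fun y n =>
    Real.BohrMollerup.logGammaSeq (y + 1 / 2) n -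
      (Real.BohrMollerup.logGammaSeq y n + Real.BohrMollerup.logGammaSeq (y + 1) n) / 2 with hSdef
  have hS : ∀ y : ℝ, ∀ n : ℕ, S y n =
      ∑ m ∈ Finset.range (n + 1),
        (log (y + m) / 2 + log (y + m + 1) / 2 - log (y + m + 1 / 2)) := by
    intro y n
    simp only [hSdef, Real.BohrMollerup.logGammaSeq]
    rw [Finset.sum_sub_distrib, Finset.sum_add_distrib, ← Finset.sum_div, ← Finset.sum_div,
      show (∑ m ∈ Finset.range (n + 1), log (y + 1 / 2 + (m : ℝ)))
          = ∑ m ∈ Finset.range (n + 1), log (y + (m : ℝ) + 1 / 2) from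
        Finset.sum_congr rfl fun m _ => by rw [add_right_comm],
      show (∑ m ∈ Finset.range (n + 1), log (y + 1 + (m : ℝ)))
          = ∑ m ∈ Finset.range (n + 1), log (y + (m : ℝ) + 1) from
        Finset.sum_congr rfl fun m _ => by rw [add_right_comm]]
    ring
  have tend : ∀ y : ℝ, 0 < y → Tendsto (S y) atTop
      (nhds (log (Gamma (y + 1 / 2)) - (log (Gamma y) + log (Gamma (y + 1))) / 2)) := by
    intro y hy
    exact (Real.BohrMollerup.tendsto_log_gamma (by positivity)).sub
      (((Real.BohrMollerup.tendsto_log_gamma hy).add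
        (Real.BohrMollerup.tendsto_log_gamma (by positivity))).div_const 2)
  refine le_of_tendsto_of_tendsto' (tend x₀ h0) (tend x hx') fun n => ?_
  rw [hS, hS]
  refine Finset.sum_le_sum fun m _ => ?_
  have h0m : 0 < x₀ + (m : ℝ) := by positivity
  have hm : x₀ + (m : ℝ) ≤ x + (m : ℝ) := by linarith
  exact term_mono h0m hm

theorem phi_div_sqrt_mono (m₀ m : ℝ) (h0 : 0 < m₀) (hm : m₀ ≤ m) :
    phi m₀ / Real.sqrt m₀ ≤ phi m / Real.sqrt m := by
  have hmpos : 0 < m := h0.trans_le hm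
  have hpos : ∀ t : ℝ, 0 < t → 0 < phi t / Real.sqrt t := by
    intro t ht
    have h1 : 0 < Real.Gamma ((t + 1) / 2) := Real.Gamma_pos_of_pos (by linarith)
    have h2 : 0 < Real.Gamma (t / 2) := Real.Gamma_pos_of_pos (by linarith)
    have : 0 < phi t := by rw [phi]; positivity
    positivity
  have hlog : ∀ t : ℝ, 0 < t → Real.log (phi t / Real.sqrt t) =
      log (Gamma (t / 2 + 1 / 2)) - (log (Gamma (t / 2)) + log (Gamma (t / 2 + 1))) / 2 := by
    intro t ht
    have h1 : 0 < Real.Gamma ((t + 1) / 2) := Real.Gamma_pos_of_pos (by linarith)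
    have h2 : 0 < Real.Gamma (t / 2) := Real.Gamma_pos_of_pos (by linarith)
    have hrec : Real.Gamma (t / 2 + 1) = (t / 2) * Real.Gamma (t / 2) :=
      Real.Gamma_add_one (by positivity)
    have he : (t + 1) / 2 = t / 2 + 1 / 2 := by ring
    rw [phi, he, Real.log_div (by positivity) (Real.sqrt_ne_zero'.2 ht),
      Real.log_div (by positivity) h2.ne', Real.log_mul (by positivity) (by positivity),
      Real.log_sqrt ht.le, Real.log_sqrt (by norm_num), hrec,
      Real.log_mul (by positivity) h2.ne', Real.log_div ht.ne' (by norm_num)]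
    ring
  rw [← Real.log_le_log_iff (hpos m₀ h0) (hpos m hmpos), hlog m₀ h0, hlog m hmpos]
  exact logGamma_mid_mono (by positivity) (by linarith)
end

section
/- Let φ(t) = √2 · Γ((t+1)/2) / Γ(t/2). Then for every real m ≥ 1, φ(m) ≤ √m. -/
theorem phi_le_sqrt (m : ℝ) (hm : 1 ≤ m) : phi m ≤ Real.sqrt m := by
  have hx : 0 < m / 2 := by linarith
  have hG : 0 < Real.Gamma (m / 2) := Real.Gamma_pos_of_pos hx
  have key := Real.Gamma_mul_add_mul_le_rpow_Gamma_mul_rpow_Gamma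
    hx (by linarith : (0:ℝ) < m / 2 + 1) (by norm_num : (0:ℝ) < 1/2)
    (by norm_num : (0:ℝ) < 1/2) (by norm_num)
  have hrec : Real.Gamma (m / 2 + 1) = m / 2 * Real.Gamma (m / 2) :=
    Real.Gamma_add_one (ne_of_gt hx)
  rw [hrec, show (1/2 : ℝ) * (m / 2) + 1/2 * (m / 2 + 1) = (m + 1) / 2 by ring] at key
  have h1 : Real.Gamma (m / 2) ^ (1/2 : ℝ) * (m / 2 * Real.Gamma (m / 2)) ^ (1/2 : ℝ)
      = Real.sqrt (m / 2) * Real.Gamma (m / 2) := by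
    rw [Real.mul_rpow hx.le hG.le, Real.sqrt_eq_rpow,
      show Real.Gamma (m / 2) ^ (1/2 : ℝ) *
        ((m / 2) ^ (1/2 : ℝ) * Real.Gamma (m / 2) ^ (1/2 : ℝ))
        = (m / 2) ^ (1/2 : ℝ) * (Real.Gamma (m / 2) ^ (1/2 : ℝ) * Real.Gamma (m / 2) ^ (1/2 : ℝ))
        by ring, ← Real.rpow_add hG]
    norm_num
  rw [h1] at key
  have hmul : Real.sqrt 2 * Real.sqrt (m / 2) = Real.sqrt m := by
    rw [← Real.sqrt_mul (by norm_num : (0:ℝ) ≤ 2)]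
    norm_num
    field_simp
  unfold phi
  rw [div_le_iff₀ hG]
  calc Real.sqrt 2 * Real.Gamma ((m + 1) / 2)
      ≤ Real.sqrt 2 * (Real.sqrt (m / 2) * Real.Gamma (m / 2)) := by
        apply mul_le_mul_of_nonneg_left key (Real.sqrt_nonneg 2)
    _ = Real.sqrt m * Real.Gamma (m / 2) := by rw [← mul_assoc, hmul]
end

section
/- Let φ(t) = √2 · Γ((t+1)/2) / Γ(t/2). Then for every real m ≥ 1, φ(m)² ≥ (1.0049/2)·m. -/
/-- Midpoint log-convexity of Gamma: `Γ(y+1/2)² ≤ Γ(y)·Γ(y+1)` for `y > 0`. -/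
lemma Gamma_sq_midpoint (y : ℝ) (hy : 0 < y) :
    Real.Gamma (y + 1/2) ^ 2 ≤ Real.Gamma y * Real.Gamma (y + 1) := by
  have h := Real.Gamma_mul_add_mul_le_rpow_Gamma_mul_rpow_Gamma
    (s := y) (t := y + 1) (a := 1/2) (b := 1/2) hy (by linarith) (by norm_num)
    (by norm_num) (by norm_num)
  have h' : Real.Gamma (y + 1/2) ≤ Real.Gamma y ^ ((1:ℝ)/2) * Real.Gamma (y+1) ^ ((1:ℝ)/2) := by
    convert h using 2
    ring
  have hga : 0 < Real.Gamma y := Real.Gamma_pos_of_pos hy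
  have hgb : 0 < Real.Gamma (y + 1) := Real.Gamma_pos_of_pos (by linarith)
  have hrhs : (Real.Gamma y ^ ((1:ℝ)/2) * Real.Gamma (y+1) ^ ((1:ℝ)/2)) ^ 2
      = Real.Gamma y * Real.Gamma (y + 1) := by
    rw [mul_pow, ← Real.rpow_natCast (Real.Gamma y ^ ((1:ℝ)/2)) 2,
      ← Real.rpow_natCast (Real.Gamma (y+1) ^ ((1:ℝ)/2)) 2,
      ← Real.rpow_mul hga.le, ← Real.rpow_mul hgb.le]
    norm_num
  calc Real.Gamma (y + 1/2) ^ 2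
      ≤ (Real.Gamma y ^ ((1:ℝ)/2) * Real.Gamma (y+1) ^ ((1:ℝ)/2)) ^ 2 := by
        apply pow_le_pow_left₀ (Real.Gamma_pos_of_pos (by linarith)).le h'
    _ = _ := hrhs

theorem phi_sq_ge (m : ℝ) (hm : 1 ≤ m) : phi m ^ 2 ≥ (1.0049 / 2) * m := by
  set x : ℝ := m / 2 with hx
  have hx2 : (1:ℝ)/2 ≤ x := by rw [hx]; linarith
  have hgx : 0 < Real.Gamma x := Real.Gamma_pos_of_pos (by linarith)
  have hgx12 : 0 < Real.Gamma (x + 1/2) := Real.Gamma_pos_of_pos (by linarith)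
  -- key log-convexity inequality at y = x + 3/2
  have key := Gamma_sq_midpoint (x + 3/2) (by linarith)
  have e1 : Real.Gamma (x + 3/2 + 1/2) = (x+1) * (x * Real.Gamma x) := by
    rw [show x + 3/2 + 1/2 = (x + 1) + 1 by ring,
      Real.Gamma_add_one (by positivity : (x:ℝ) + 1 ≠ 0),
      show x + 1 = x + 1 from rfl]
    rw [show (x:ℝ) + 1 = x + 1 from rfl]
    congr 1
    exact Real.Gamma_add_one (by positivity)
  have e2 : Real.Gamma (x + 3/2) = (x + 1/2) * Real.Gamma (x + 1/2) := by
    rw [show x + 3/2 = (x + 1/2) + 1 by ring,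
      Real.Gamma_add_one (by positivity : (x:ℝ) + 1/2 ≠ 0)]
  have e3 : Real.Gamma (x + 3/2 + 1) = (x + 3/2) * ((x + 1/2) * Real.Gamma (x + 1/2)) := by
    rw [Real.Gamma_add_one (by positivity : (x:ℝ) + 3/2 ≠ 0), e2]
  rw [e1, e2, e3] at key
  -- key : ((x+1) * (x * Γ x))^2 ≤ (x+1/2)Γ(x+1/2) * ((x+3/2)((x+1/2)Γ(x+1/2)))
  have keyq : (x+1)^2 * x^2 * Real.Gamma x ^ 2
      ≤ (x + 3/2) * (x + 1/2)^2 * Real.Gamma (x + 1/2) ^ 2 := by nlinarith [key]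
  -- polynomial inequality
  have hpoly : 1.0049 * x * ((x + 3/2) * (x + 1/2)^2) ≤ 2 * ((x+1)^2 * x^2) := by
    nlinarith [sq_nonneg (x - 1/2), sq_nonneg x, mul_pos (by linarith : (0:ℝ) < x) (by linarith : (0:ℝ) < x)]
  -- rewrite phi m
  have hphi : phi m ^ 2 = 2 * Real.Gamma (x + 1/2) ^ 2 / Real.Gamma x ^ 2 := by
    rw [phi, show (m + 1) / 2 = x + 1/2 by rw [hx]; ring, show m / 2 = x from hx.symm]
    rw [div_pow, mul_pow, Real.sq_sqrt (by norm_num : (0:ℝ) ≤ 2)]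
  rw [hphi, ge_iff_le, le_div_iff₀ (by positivity)]
  have hm2 : m = 2 * x := by rw [hx]; ring
  rw [hm2]
  -- goal : 1.0049/2 * (2x) * Γx^2 ≤ 2 * Γ(x+1/2)^2
  have hGx2 : (0:ℝ) < Real.Gamma x ^ 2 := by positivity
  nlinarith [mul_le_mul_of_nonneg_right hpoly hGx2.le, keyq,
    mul_pos (by positivity : (0:ℝ) < (x+3/2) * (x+1/2)^2) (by positivity : (0:ℝ) < Real.Gamma (x+1/2)^2)]
end
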